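/- Let G be a linearly ordered abelian group, S a final segment, and H a convex subgroup of G with 𝒢(S) ⊊ H. Then the image S/H of S under the quotient map G → G/H (with the induced linear order on G/H) is a principal final segment of G/H, i.e., has a smallest element. -/

import Mathlib

/-! An element `g > 0` of `H` outside `𝒢(S)` moves `S` strictly into itself, so some `α ∈ S`
has `α - g ∉ S`. Since `S` is upward closed, `α - g` lies below all of `S`, i.e. `α + (-g) ≤ β`
for every `β ∈ S`: the coset of `α` is the least element of `S/H`. -/

/-- A final segment of a linearly ordered abelian group: a nonempty proper
upward-closed subset. -/
def IsFinalSegment {G : Type*} [AddCommGroup G] [LinearOrder G] [IsOrderedAddMonoid G] (S : Set G) : Prop :=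
  S.Nonempty ∧ S ≠ Set.univ ∧ ∀ a ∈ S, ∀ b, a ≤ b → b ∈ S

/-- The invariance group of a subset `M`: `𝒢(M) = {γ | M + γ = M}`. -/
def invGrp {G : Type*} [AddCommGroup G] [LinearOrder G] [IsOrderedAddMonoid G] (M : Set G) : Set G :=
  {γ | (fun m => m + γ) '' M = M}

section

variable {G : Type*} [AddCommGroup G] [LinearOrder G] [IsOrderedAddMonoid G]

theorem IsFinalSegment.isUpperSet {S : Set G} (hS : IsFinalSegment S) : IsUpperSet S :=
  fun _ _ hab ha => hS.2.2 _ ha _ hab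

theorem neg_mem_invGrp {M : Set G} {γ : G} (hγ : γ ∈ invGrp M) : -γ ∈ invGrp M := by
  change (· + -γ) '' M = M
  conv_lhs => rw [← (hγ : (· + γ) '' M = M), Set.image_image]
  simp

theorem zero_mem_invGrp (M : Set G) : (0 : G) ∈ invGrp M := by
  simp [invGrp]

theorem exists_pos_mem_notMem_invGrp {M : Set G} {H : AddSubgroup G}
    (hH : ¬(H : Set G) ⊆ invGrp M) : ∃ g ∈ H, 0 < g ∧ g ∉ invGrp M := by
  obtain ⟨h, hH, hM⟩ := Set.not_subset.1 hH
  rcases lt_trichotomy h 0 with hneg | rfl | hpos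
  · exact ⟨-h, neg_mem hH, neg_pos.2 hneg, fun h' => hM (by simpa using neg_mem_invGrp h')⟩
  · exact absurd (zero_mem_invGrp M) hM
  · exact ⟨h, hH, hpos, hM⟩

theorem IsUpperSet.image_add_subset {S : Set G} (hS : IsUpperSet S) {g : G} (hg : 0 ≤ g) :
    (· + g) '' S ⊆ S := by
  rintro _ ⟨s, hs, rfl⟩
  exact hS (le_add_of_nonneg_right hg) hs

theorem IsUpperSet.exists_sub_notMem_of_notMem_invGrp {S : Set G} (hS : IsUpperSet S) {g : G}
    (hg : 0 ≤ g) (hgS : g ∉ invGrp S) : ∃ α ∈ S, α - g ∉ S := by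
  obtain ⟨α, hα, hαg⟩ := Set.not_subset.1 fun h => hgS ((hS.image_add_subset hg).antisymm h)
  exact ⟨α, hα, fun h => hαg ⟨α - g, h, sub_add_cancel α g⟩⟩

end

theorem quotient_principal_of_invGrp_lt_general {G : Type*} [AddCommGroup G] [LinearOrder G] [IsOrderedAddMonoid G]
    (S : Set G) (hS : IsFinalSegment S) (H : AddSubgroup G)
    (hlt : invGrp S ⊂ (H : Set G)) :
    ∃ α ∈ S, ∀ β ∈ S, ∃ h ∈ H, α + h ≤ β := by
  obtain ⟨g, hgH, hg, hgS⟩ := exists_pos_mem_notMem_invGrp hlt.2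
  obtain ⟨α, hα, hαg⟩ := hS.isUpperSet.exists_sub_notMem_of_notMem_invGrp hg.le hgS
  refine ⟨α, hα, fun β hβ => ⟨-g, neg_mem hgH, ?_⟩⟩
  rw [← sub_eq_add_neg]
  exact le_of_not_ge fun hβα => hαg (hS.isUpperSet hβα hβ)

/-- Let `S` be a final segment and `H` a convex subgroup with `𝒢(S) ⊊ H`. Then the
image `S/H` of `S` in the ordered quotient `G/H` is a principal final segment, i.e. it
has a smallest element: there exists `α ∈ S` whose coset is a smallest element of
`S/H`; in terms of representatives, `α/H ≤ β/H` (i.e. `∃ h ∈ H, α + h ≤ β`) for all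
`β ∈ S`. -/
theorem quotient_principal_of_invGrp_lt {G : Type*} [AddCommGroup G] [LinearOrder G] [IsOrderedAddMonoid G]
    (S : Set G) (hS : IsFinalSegment S) (H : AddSubgroup G)
    (hconv : ∀ a ∈ H, ∀ b ∈ H, ∀ c : G, a ≤ c → c ≤ b → c ∈ H)
    (hlt : invGrp S ⊂ (H : Set G)) :
    ∃ α ∈ S, ∀ β ∈ S, ∃ h ∈ H, α + h ≤ β :=
  quotient_principal_of_invGrp_lt_general S hS H hlt
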